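/- In the setting of the slope factorization, every F ∈ S^≤ satisfies F = [F₂]_{<p} · [F₁]_{≥p}, where Δ(F) = F₁ ⊗ F₂ in Sweedler notation, [F₂]_{<p} ∈ S⁻_{(-∞,p)} and [F₁]_{≥p} ∈ S⁻_{[p,∞]} are the projections defined via the perfect restricted pairings. -/

import Mathlib

/-!
STATEMENT 6: In the slope-factorization setting, every `F ∈ S^≤` (here the
bialgebra `B`) satisfies `F = [F₂]_{<p} · [F₁]_{≥p}` in Sweedler notation
`Δ(F) = F₁ ⊗ F₂`, i.e. `mul ∘ ([·]_{<p} ⊗ [·]_{≥p}) ∘ swap ∘ Δ = id`, where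
`[F]_{<p} ∈ B₁ = S⁻_{(-∞,p)}` and `[F]_{≥p} ∈ B₂ = S⁻_{[p,∞]}` are the
projections defined via the perfect restricted pairings with
`A₁ = S⁺_{(-∞,p)}` and `A₂ = S⁺_{[p,∞]}`.
-/

open TensorProduct

/-- `pair2' p (b₁ ⊗ b₂) (a₁ ⊗ a₂) = ⟨a₁,b₁⟩⟨a₂,b₂⟩`. -/
noncomputable def pair2' {K A B : Type*} [CommRing K] [AddCommGroup A] [Module K A]
    [AddCommGroup B] [Module K B] (p : A →ₗ[K] Module.Dual K B) :
    B ⊗[K] B →ₗ[K] Module.Dual K (A ⊗[K] A) :=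
  (TensorProduct.dualDistrib K A A) ∘ₗ (TensorProduct.map p.flip p.flip)

/-!
Both sides of `F = [F₂]_{<p} · [F₁]_{≥p}` are compared by pairing them with products `e'·e`,
`e' ∈ A₁`, `e ∈ A₂`, which span `A`. On the right, the factorization of the pairing and the
defining property of the projections give `∑ ⟨e', F₂⟩⟨e, F₁⟩`, which is `⟨e'·e, F⟩` by the
bialgebra pairing axiom. Non-degeneracy then forces equality.
-/

theorem eq_of_pairing_eq_on_spanning {K A B : Type*} [CommRing K] [AddCommGroup A] [Module K A]
    [AddCommGroup B] [Module K B] (p : A →ₗ[K] Module.Dual K B)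
    (hnondeg : ∀ b : B, (∀ a : A, p a b = 0) → b = 0) {s : Set A}
    (hs : Submodule.span K s = ⊤) {x y : B} (h : ∀ a ∈ s, p a x = p a y) : x = y := by
  have hflip : p.flip x = p.flip y := LinearMap.ext_on hs h
  refine sub_eq_zero.mp (hnondeg _ fun a => ?_)
  simpa [sub_eq_zero] using LinearMap.congr_fun hflip a

theorem pair_mul_mul'_map_comm_eq_pair2' {K A B : Type*} [CommRing K] [Ring A] [Ring B]
    [Algebra K A] [Algebra K B] (p : A →ₗ[K] Module.Dual K B)
    {A1 A2 : Subalgebra K A} {B1 B2 : Subalgebra K B}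
    (hfact : ∀ e' ∈ A1, ∀ e ∈ A2, ∀ f ∈ B1, ∀ f' ∈ B2,
      p (e' * e) (f * f') = p e' f * p e f')
    {πlt : B →ₗ[K] B} (hltmem : ∀ y : B, πlt y ∈ B1)
    (hltpair : ∀ y : B, ∀ e ∈ A1, p e (πlt y) = p e y)
    {πgeq : B →ₗ[K] B} (hgeqmem : ∀ y : B, πgeq y ∈ B2)
    (hgeqpair : ∀ y : B, ∀ e ∈ A2, p e (πgeq y) = p e y)
    {e' e : A} (he' : e' ∈ A1) (he : e ∈ A2) (T : B ⊗[K] B) :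
    p (e' * e) (LinearMap.mul' K B (map πlt πgeq (TensorProduct.comm K B B T))) =
      pair2' p T (e ⊗ₜ[K] e') := by
  induction T using TensorProduct.induction_on with
  | zero => simp
  | tmul f f' =>
    rw [TensorProduct.comm_tmul, map_tmul, LinearMap.mul'_apply,
      hfact e' he' e he _ (hltmem f') _ (hgeqmem f), hltpair f' e' he', hgeqpair f e he]
    simp [pair2', dualDistrib_apply, mul_comm]
  | add x y hx hy => simp only [map_add, LinearMap.add_apply, hx, hy]

theorem factorization_F_lt_geq
    {K A B : Type*} [Field K] [Ring A] [Ring B]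
    [Bialgebra K A] [Bialgebra K B]
    (p : A →ₗ[K] Module.Dual K B)
    -- bialgebra pairing axiom: ⟨a'a'', b⟩ = ⟨a',b₂⟩⟨a'',b₁⟩
    (hpair2 : ∀ (a a' : A) (b : B),
      p (a * a') b = pair2' p (Coalgebra.comul (R := K) b) (a' ⊗ₜ[K] a))
    -- slope subalgebras
    (A1 A2 : Subalgebra K A) (B1 B2 : Subalgebra K B)
    -- the pairing factorizes along the slope decompositions
    (hfact : ∀ e' ∈ A1, ∀ e ∈ A2, ∀ f ∈ B1, ∀ f' ∈ B2,
      p (e' * e) (f * f') = p e' f * p e f')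
    -- non-degeneracy of the full pairing
    (hnondeg : ∀ b : B, (∀ a : A, p a b = 0) → b = 0)
    -- A = A₁ · A₂ : every element of A is a sum of products e'·e
    (hAspan : Submodule.span K {a : A | ∃ e' ∈ A1, ∃ e ∈ A2, a = e' * e} = ⊤)
    -- the projection [·]_{<p} : S^≤ → S⁻_{(-∞,p)}, defined via the perfect pairing with A₁
    (πlt : B →ₗ[K] B)
    (hltmem : ∀ y : B, πlt y ∈ B1)
    (hltpair : ∀ y : B, ∀ e ∈ A1, p e (πlt y) = p e y)
    -- the projection [·]_{≥p} : S^≤ → S⁻_{[p,∞]}, defined via the perfect pairing with A₂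
    (πgeq : B →ₗ[K] B)
    (hgeqmem : ∀ y : B, πgeq y ∈ B2)
    (hgeqpair : ∀ y : B, ∀ e ∈ A2, p e (πgeq y) = p e y) :
    ∀ F : B,
      (LinearMap.mul' K B)
        (TensorProduct.map πlt πgeq
          ((TensorProduct.comm K B B) (Coalgebra.comul (R := K) F))) = F := by
  intro F
  refine eq_of_pairing_eq_on_spanning p hnondeg hAspan ?_
  rintro _ ⟨e', he', e, he, rfl⟩
  rw [pair_mul_mul'_map_comm_eq_pair2' p hfact hltmem hltpair hgeqmem hgeqpair he' he, hpair2]
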